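/- arXiv:0801.4693 — 5 statements merged into one kernel-verified Lean document; each statement's English description precedes it below -/
import Mathlib

section
/- The only integer solutions (m,n) of the Thue equation m^3 - 3mn^2 + n^3 = 3 are (-1,-2), (-1,1), and (2,1). -/
theorem thue_eq_three (m n : ℤ) :
    m ^ 3 - 3 * m * n ^ 2 + n ^ 3 = 3 ↔
      (m, n) = (-1, -2) ∨ (m, n) = (-1, 1) ∨ (m, n) = (2, 1) := by
  constructor
  · intro h
    -- the cubic covariant and the Hessian-type quadratic
    set g : ℤ := m ^ 3 - 6 * m ^ 2 * n + 3 * m * n ^ 2 + n ^ 3 with hg_def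
    set k : ℤ := m ^ 2 - m * n + n ^ 2 with hk_def
    -- syzygy: g² = 4k³ − 3F², with F = 3
    have hsyz : g ^ 2 = 4 * k ^ 3 - 3 * (m ^ 3 - 3 * m * n ^ 2 + n ^ 3) ^ 2 := by
      rw [hg_def, hk_def]; ring
    rw [h] at hsyz
    have hmord : g ^ 2 + 27 = 4 * k ^ 3 := by linarith
    -- Fermat for exponent 3 over ℤ
    have flt : ∀ a b c : ℤ, a ≠ 0 → b ≠ 0 → c ≠ 0 → a ^ 3 + b ^ 3 ≠ c ^ 3 :=
      fermatLastTheoremFor_iff_int.mp fermatLastTheoremThree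
    have habc : (36 + 4 * g) ^ 3 + (36 - 4 * g) ^ 3 = (24 * k) ^ 3 := by
      linear_combination (3456 : ℤ) * hmord
    have hzero : 36 + 4 * g = 0 ∨ 36 - 4 * g = 0 ∨ 24 * k = 0 := by
      by_contra hcon
      push_neg at hcon
      exact flt _ _ _ hcon.1 hcon.2.1 hcon.2.2 habc
    have hk3 : k = 3 := by
      rcases hzero with h1 | h1 | h1
      · have hg9 : g = -9 := by omega
        have : k ^ 3 = 27 := by rw [hg9] at hmord; linarith
        nlinarith [sq_nonneg (k - 3), sq_nonneg (k + 3), sq_nonneg k]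
      · have hg9 : g = 9 := by omega
        have : k ^ 3 = 27 := by rw [hg9] at hmord; linarith
        nlinarith [sq_nonneg (k - 3), sq_nonneg (k + 3), sq_nonneg k]
      · have hk0 : k = 0 := by omega
        exfalso
        rw [hk0] at hmord
        nlinarith [sq_nonneg g]
    rw [hk_def] at hk3
    have hm : -2 ≤ m ∧ m ≤ 2 := by
      constructor <;> nlinarith [sq_nonneg (2 * n - m), sq_nonneg m]
    have hn : -2 ≤ n ∧ n ≤ 2 := by
      constructor <;> nlinarith [sq_nonneg (2 * m - n), sq_nonneg n]
    obtain ⟨hm1, hm2⟩ := hm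
    obtain ⟨hn1, hn2⟩ := hn
    interval_cases m <;> interval_cases n <;>
      simp_all [Prod.ext_iff]
  · rintro (h | h | h) <;>
      · rw [Prod.ext_iff] at h
        obtain ⟨h1, h2⟩ := h
        subst h1; subst h2; norm_num
end

section
/- If (m,n,t) are integers with gcd(m,n)=1 satisfying t·(m^3-3mn^2+n^3)^3 = -3(m^3+3m^2n-6mn^2+4n^3)(m^3+3m^2n+3mn^2+4n^3)(5m^3-3m^2n-3mn^2+2n^3), then m^3-3mn^2+n^3 = ±1 or m^3-3mn^2+n^3 = ±3. -/
lemma aux_mod9 : ∀ a b : ZMod 9, a ^ 3 - 3 * a * b ^ 2 + b ^ 3 = 0 →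
    (ZMod.castHom (show (3:ℕ) ∣ 9 by norm_num) (ZMod 3) a = 0 ∧
     ZMod.castHom (show (3:ℕ) ∣ 9 by norm_num) (ZMod 3) b = 0) := by decide

theorem cubic_form_pm_one_or_three (m n t : ℤ) (h : IsCoprime m n)
    (ht : t * (m ^ 3 - 3 * m * n ^ 2 + n ^ 3) ^ 3 =
      -3 * (m ^ 3 + 3 * m ^ 2 * n - 6 * m * n ^ 2 + 4 * n ^ 3) *
        (m ^ 3 + 3 * m ^ 2 * n + 3 * m * n ^ 2 + 4 * n ^ 3) *
        (5 * m ^ 3 - 3 * m ^ 2 * n - 3 * m * n ^ 2 + 2 * n ^ 3)) :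
    m ^ 3 - 3 * m * n ^ 2 + n ^ 3 = 1 ∨ m ^ 3 - 3 * m * n ^ 2 + n ^ 3 = -1 ∨
    m ^ 3 - 3 * m * n ^ 2 + n ^ 3 = 3 ∨ m ^ 3 - 3 * m * n ^ 2 + n ^ 3 = -3 := by
  -- D divides the right-hand side product
  have h1 : (m ^ 3 - 3 * m * n ^ 2 + n ^ 3) ∣
      -3 * (m ^ 3 + 3 * m ^ 2 * n - 6 * m * n ^ 2 + 4 * n ^ 3) *
        (m ^ 3 + 3 * m ^ 2 * n + 3 * m * n ^ 2 + 4 * n ^ 3) *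
        (5 * m ^ 3 - 3 * m ^ 2 * n - 3 * m * n ^ 2 + 2 * n ^ 3) :=
    ⟨t * (m ^ 3 - 3 * m * n ^ 2 + n ^ 3) ^ 2, by linear_combination -ht⟩
  -- Bezout-type identity: D divides 3^9 * n^12
  have h2 : (m ^ 3 - 3 * m * n ^ 2 + n ^ 3) ∣ (19683 : ℤ) * n ^ 12 := by
    have e : (19683 : ℤ) * n ^ 12 =
        (m ^ 3 - 3 * m * n ^ 2 + n ^ 3) *
          (3 * ((-15903) * n^9 + 5427 * m * n^8 + 18225 * m^2 * n^7 +
            (-14310) * m^3 * n^6 + 3645 * m^4 * n^5 + (-8019) * m^5 * n^4 +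
            4509 * m^6 * n^3 + 6966 * m^7 * n^2 + 1215 * m^8 * n)) +
        (-(702 * n^3 + (-81) * m * n^2 + (-243) * m^2 * n)) *
          (-3 * (m ^ 3 + 3 * m ^ 2 * n - 6 * m * n ^ 2 + 4 * n ^ 3) *
            (m ^ 3 + 3 * m ^ 2 * n + 3 * m * n ^ 2 + 4 * n ^ 3) *
            (5 * m ^ 3 - 3 * m ^ 2 * n - 3 * m * n ^ 2 + 2 * n ^ 3)) := by ring
    rw [e]
    exact dvd_add (Dvd.intro _ rfl) (h1.mul_left _)
  -- D is coprime to n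
  have hcop : IsCoprime (m ^ 3 - 3 * m * n ^ 2 + n ^ 3) n := by
    have hp : IsCoprime (m ^ 3) n := h.pow_left
    have := hp.add_mul_left_left (n ^ 2 - 3 * m * n)
    rwa [show m ^ 3 + n * (n ^ 2 - 3 * m * n) = m ^ 3 - 3 * m * n ^ 2 + n ^ 3 by ring] at this
  have hcop12 : IsCoprime (m ^ 3 - 3 * m * n ^ 2 + n ^ 3) (n ^ 12) := hcop.pow_right
  have h3 : (m ^ 3 - 3 * m * n ^ 2 + n ^ 3) ∣ (19683 : ℤ) :=
    hcop12.dvd_of_dvd_mul_right h2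
  -- 9 does not divide D
  have h9 : ¬ (9 : ℤ) ∣ (m ^ 3 - 3 * m * n ^ 2 + n ^ 3) := by
    intro h9
    have h0 : ((m ^ 3 - 3 * m * n ^ 2 + n ^ 3 : ℤ) : ZMod 9) = 0 :=
      (ZMod.intCast_zmod_eq_zero_iff_dvd _ 9).mpr h9
    push_cast at h0
    obtain ⟨ha, hb⟩ := aux_mod9 _ _ h0
    rw [map_intCast] at ha hb
    have h3m : (3 : ℤ) ∣ m := (ZMod.intCast_zmod_eq_zero_iff_dvd m 3).mp ha
    have h3n : (3 : ℤ) ∣ n := (ZMod.intCast_zmod_eq_zero_iff_dvd n 3).mp hb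
    have := h.isUnit_of_dvd' h3m h3n
    rw [Int.isUnit_iff] at this
    omega
  have habs : (m ^ 3 - 3 * m * n ^ 2 + n ^ 3).natAbs ∣ 3 ^ 9 := by
    have := Int.natAbs_dvd_natAbs.mpr h3
    norm_num at this ⊢
    exact this
  obtain ⟨k, hk, he⟩ := (Nat.dvd_prime_pow Nat.prime_three).mp habs
  interval_cases k
  · rcases Int.natAbs_eq_iff.mp (by simpa using he) with h' | h'
    · exact Or.inl h'
    · exact Or.inr (Or.inl h')
  · rcases Int.natAbs_eq_iff.mp (by simpa using he) with h' | h'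
    · exact Or.inr (Or.inr (Or.inl h'))
    · exact Or.inr (Or.inr (Or.inr h'))
  all_goals
    exact absurd (Int.dvd_natAbs.mp (by rw [he]; norm_num)) h9
end

section
/- For every prime p dividing both -3(c^3+3c^2-6c+4)(c^3+3c^2+3c+4)(5c^3-3c^2-3c+2) and c^3-3c+1, where c is any element of Z/pZ satisfying c^3-3c+1 ≡ 0 (mod p), we have p = 3. -/
theorem common_root_implies_three (p : ℕ) (hp : p.Prime) (c : ZMod p)
    (h1 : c ^ 3 - 3 * c + 1 = 0)
    (h2 : -3 * (c ^ 3 + 3 * c ^ 2 - 6 * c + 4) * (c ^ 3 + 3 * c ^ 2 + 3 * c + 4) *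
      (5 * c ^ 3 - 3 * c ^ 2 - 3 * c + 2) = 0) : p = 3 := by
  have key : ((729 : ℕ) : ZMod p) = 0 := by
    push_cast
    linear_combination (135 * c ^ 8 + 774 * c ^ 7 + 501 * c ^ 6 - 891 * c ^ 5 + 405 * c ^ 4
      - 1590 * c ^ 3 + 2025 * c ^ 2 + 603 * c - 1767) * h1 + (9 * c ^ 2 + 3 * c - 26) * h2
  have hdvd : p ∣ 729 := (ZMod.natCast_eq_zero_iff _ _).mp key
  have h36 : (729 : ℕ) = 3 ^ 6 := by norm_num
  rw [h36] at hdvd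
  have : p ∣ 3 := hp.dvd_of_dvd_pow hdvd
  exact (Nat.prime_dvd_prime_iff_eq hp Nat.prime_three).mp this
end

section
/- Substituting u = (y+ρ)/(ρy+1), where ρ = (-1+√(-3))/2 is a primitive cube root of unity, into the rational function t(u) = ρ^{-1}(w(u)^3 + 9·w(u) - 6) with w(u) = 3√(-3)·u·(-u^2-ρ^{-1})/(u^3-ρ^{-1}) + √(-3), yields t = -3(y^3+3y^2-6y+4)(y^3+3y^2+3y+4)(5y^3-3y^2-3y+2)/(y^3-3y+1)^3 as an identity of rational functions over Q(√(-3)). -/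
/-!
Write ρ for a root of `ρ ^ 2 + ρ + 1 = 0`, so that `s = 2 * ρ + 1` and `ρ⁻¹ = ρ ^ 2`. For
`u = (y + ρ) / (ρ * y + 1)` both `u ^ 3 - ρ⁻¹` and `u * (-u ^ 2 - ρ⁻¹)` have denominator
`(ρ * y + 1) ^ 3`, with numerators `(1 - ρ ^ 2) * (y ^ 3 - 3 * y + 1)` and
`ρ ^ 2 * (y + ρ) * (y ^ 2 + 2 * y - 2)`; hence `w = (A - ρ * B) / (y ^ 3 - 3 * y + 1)` with
`A = y ^ 3 + 3 * y ^ 2 + 3 * y - 5` and `B = y ^ 3 + 3 * y ^ 2 - 6 * y + 4`. Cubing `A - ρ * B`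
in the basis `1, ρ`, the `ρ`-free part of `w ^ 3 + 9 * w - 6` vanishes identically, so `ρ⁻¹`
cancels and what remains is a rational function of `y` alone, which factors as stated.
-/

section CommRing

variable {R : Type*} [CommRing R] {ρ : R}

theorem pow_three_eq_one_of_sq_add_self_add_one (hρ : ρ ^ 2 + ρ + 1 = 0) : ρ ^ 3 = 1 := by
  linear_combination (ρ - 1) * hρ

theorem add_mul_pow_three_of_sq_add_self_add_one (hρ : ρ ^ 2 + ρ + 1 = 0) (a b : R) :
    (a + ρ * b) ^ 3 = a ^ 3 - 3 * a * b ^ 2 + b ^ 3 + ρ * (3 * a * b * (a - b)) := by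
  linear_combination (3 * a * b ^ 2 + (ρ - 1) * b ^ 3) * hρ

end CommRing

section Field

variable {K : Type*} [Field K] {ρ : K}

theorem inv_eq_sq_of_sq_add_self_add_one (hρ : ρ ^ 2 + ρ + 1 = 0) : ρ⁻¹ = ρ ^ 2 :=
  inv_eq_of_mul_eq_one_right (by linear_combination pow_three_eq_one_of_sq_add_self_add_one hρ)

theorem one_sub_sq_ne_zero_of_sq_add_self_add_one (hρ : ρ ^ 2 + ρ + 1 = 0) (h3 : (3 : K) ≠ 0) :
    1 - ρ ^ 2 ≠ 0 :=
  fun h => h3 (by linear_combination (1 - ρ) * h - (ρ - 2) * hρ)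

theorem mul_sq_div_one_sub_sq_of_sq_add_self_add_one (hρ : ρ ^ 2 + ρ + 1 = 0)
    (h3 : (3 : K) ≠ 0) : (2 * ρ + 1) * ρ ^ 2 / (1 - ρ ^ 2) = -ρ := by
  rw [div_eq_iff (one_sub_sq_ne_zero_of_sq_add_self_add_one hρ h3)]
  linear_combination ρ * hρ

variable {y : K}

theorem moebius_pow_three_sub_sq (hρ : ρ ^ 2 + ρ + 1 = 0) (hy : ρ * y + 1 ≠ 0) :
    ((y + ρ) / (ρ * y + 1)) ^ 3 - ρ ^ 2
      = (1 - ρ ^ 2) * (y ^ 3 - 3 * y + 1) / (ρ * y + 1) ^ 3 := by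
  rw [div_pow, div_sub' (pow_ne_zero 3 hy)]
  congr 1
  linear_combination
    (-(ρ ^ 2 * y ^ 3 + 3 * ρ * y ^ 2 + 3 * y - 1)) * pow_three_eq_one_of_sq_add_self_add_one hρ

theorem moebius_mul_neg_sq_sub_sq (hρ : ρ ^ 2 + ρ + 1 = 0) (hy : ρ * y + 1 ≠ 0) :
    (y + ρ) / (ρ * y + 1) * (-((y + ρ) / (ρ * y + 1)) ^ 2 - ρ ^ 2)
      = ρ ^ 2 * (y + ρ) * (y ^ 2 + 2 * y - 2) / (ρ * y + 1) ^ 3 := by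
  have hy' : y * ρ + 1 ≠ 0 := by rwa [mul_comm]
  field_simp
  linear_combination (-(y + ρ) * ((ρ ^ 2 - ρ + 1) * y ^ 2 + 2 * ρ * y)) * hρ

theorem w_eq_of_moebius (hρ : ρ ^ 2 + ρ + 1 = 0) (h3 : (3 : K) ≠ 0) (hy : ρ * y + 1 ≠ 0)
    (hD : y ^ 3 - 3 * y + 1 ≠ 0) {s u : K} (hs : s = 2 * ρ + 1)
    (hu : u = (y + ρ) / (ρ * y + 1)) :
    3 * s * u * (-u ^ 2 - ρ⁻¹) / (u ^ 3 - ρ⁻¹) + s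
      = (y ^ 3 + 3 * y ^ 2 + 3 * y - 5 - ρ * (y ^ 3 + 3 * y ^ 2 - 6 * y + 4))
          / (y ^ 3 - 3 * y + 1) := by
  calc 3 * s * u * (-u ^ 2 - ρ⁻¹) / (u ^ 3 - ρ⁻¹) + s
      = 3 * ((2 * ρ + 1) * ρ ^ 2 / (1 - ρ ^ 2)) * ((y + ρ) * (y ^ 2 + 2 * y - 2))
          / (y ^ 3 - 3 * y + 1) + s := by
        rw [inv_eq_sq_of_sq_add_self_add_one hρ, mul_assoc _ u, hu,
          moebius_mul_neg_sq_sub_sq hρ hy, moebius_pow_three_sub_sq hρ hy, mul_div_assoc,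
          div_div_div_cancel_right₀ (pow_ne_zero 3 hy), ← div_div, hs]
        ring
    _ = (-3 * ρ * (y + ρ) * (y ^ 2 + 2 * y - 2) + s * (y ^ 3 - 3 * y + 1))
          / (y ^ 3 - 3 * y + 1) := by
        rw [mul_sq_div_one_sub_sq_of_sq_add_self_add_one hρ h3, div_add' _ _ _ hD]
        ring
    _ = _ := by
        rw [hs]
        congr 1
        linear_combination -3 * (y ^ 2 + 2 * y - 2) * hρ

theorem homogenized_cube_add_nine_mul_sub_six_eq (hρ : ρ ^ 2 + ρ + 1 = 0) :
    (y ^ 3 + 3 * y ^ 2 + 3 * y - 5 - ρ * (y ^ 3 + 3 * y ^ 2 - 6 * y + 4)) ^ 3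
      + 9 * (y ^ 3 + 3 * y ^ 2 + 3 * y - 5 - ρ * (y ^ 3 + 3 * y ^ 2 - 6 * y + 4))
        * (y ^ 3 - 3 * y + 1) ^ 2
      - 6 * (y ^ 3 - 3 * y + 1) ^ 3
      = ρ * (-3 * (y ^ 3 + 3 * y ^ 2 - 6 * y + 4) * (y ^ 3 + 3 * y ^ 2 + 3 * y + 4) *
        (5 * y ^ 3 - 3 * y ^ 2 - 3 * y + 2)) := by
  rw [sub_eq_add_neg _ (ρ * _), ← mul_neg, add_mul_pow_three_of_sq_add_self_add_one hρ]
  ring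

theorem inv_mul_div_cube_add_nine_mul_div_sub_six (hρ : ρ ^ 2 + ρ + 1 = 0) {N D M : K}
    (hD : D ≠ 0) (h : N ^ 3 + 9 * N * D ^ 2 - 6 * D ^ 3 = ρ * M) :
    ρ⁻¹ * ((N / D) ^ 3 + 9 * (N / D) - 6) = M / D ^ 3 := by
  have hρ0 : ρ ≠ 0 := by rintro rfl; norm_num at hρ
  field_simp
  linear_combination h

end Field

theorem RatFunc.algebraMap_ne_zero_of_coeff_zero_ne_zero {F : Type*} [Field F]
    {p : Polynomial F} (hp : p.coeff 0 ≠ 0) : algebraMap (Polynomial F) (RatFunc F) p ≠ 0 :=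
  RatFunc.algebraMap_ne_zero fun h => hp (by rw [h, Polynomial.coeff_zero])

open RatFunc

theorem parametrization_in_y (F : Type*) [Field F] [CharZero F] (s : F) (hs : s ^ 2 = -3) :
    let ρ : F := (-1 + s) / 2
    let y : RatFunc F := RatFunc.X
    let u : RatFunc F := (y + RatFunc.C ρ) / (RatFunc.C ρ * y + 1)
    let w : RatFunc F :=
      3 * RatFunc.C s * u * (-u ^ 2 - (RatFunc.C ρ)⁻¹) / (u ^ 3 - (RatFunc.C ρ)⁻¹) + RatFunc.C s
    (RatFunc.C ρ)⁻¹ * (w ^ 3 + 9 * w - 6) =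
      -3 * (y ^ 3 + 3 * y ^ 2 - 6 * y + 4) * (y ^ 3 + 3 * y ^ 2 + 3 * y + 4) *
        (5 * y ^ 3 - 3 * y ^ 2 - 3 * y + 2) / (y ^ 3 - 3 * y + 1) ^ 3 := by
  intro ρ y u w
  have hρ : C ρ ^ 2 + C ρ + 1 = 0 := by
    rw [← map_pow, ← map_add, ← map_one C, ← map_add, ← map_zero C]
    congr 1
    linear_combination hs / 4
  have hsρ : C s = 2 * C ρ + 1 := by
    rw [← map_ofNat C 2, ← map_mul, ← map_one C, ← map_add]
    congr 1
    ring
  have hy : C ρ * X + 1 ≠ 0 := by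
    have h := algebraMap_ne_zero_of_coeff_zero_ne_zero
      (p := Polynomial.C ρ * Polynomial.X + 1) (by simp)
    rwa [map_add, map_mul, RatFunc.algebraMap_C, RatFunc.algebraMap_X, map_one] at h
  have hD : (X : RatFunc F) ^ 3 - 3 * X + 1 ≠ 0 := by
    have h := algebraMap_ne_zero_of_coeff_zero_ne_zero
      (p := (Polynomial.X ^ 3 - 3 * Polynomial.X + 1 : Polynomial F)) (by simp)
    rwa [map_add, map_sub, map_pow, map_mul, map_ofNat, RatFunc.algebraMap_X, map_one] at h
  rw [show w = _ from w_eq_of_moebius hρ three_ne_zero hy hD hsρ rfl]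
  exact inv_mul_div_cube_add_nine_mul_div_sub_six hρ hD
    (homogenized_cube_add_nine_mul_sub_six_eq hρ)
end

section
/- If d < -3 is the discriminant of an imaginary quadratic field of class number one, then every prime p < (1+|d|)/4 is inert in that field; in particular if |d| > 11 then 3 is inert, i.e., d is a nonzero quadratic non-residue mod 3 situation: d ≡ 2 (mod 3). -/
/-!
If `3` were not prime in the PID `𝓞 K`, it would have a factor `a` of norm `±3`. For every
`x ∈ 𝓞 K` the discriminant `tr(x)² - 4 N(x)` of `{1, x}` is `c² · disc K`, hence `0` or below `-11`;
for `a` this forces `tr a = 0` and `N a = 3`, so `a² = -3`. Then `b = (1 + a) / 2` is integral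
(`b² - b + 1 = 0`), and the discriminant of `{1, b}` is a quarter of that of `{1, a}`, i.e. `-3`.
-/

open NumberField Module Polynomial

namespace Algebra

variable {R S : Type*} [CommRing R] [CommRing S] [Algebra R S]

theorem discr_eq_det_sq_mul_discr {ι : Type*} [Fintype ι] [DecidableEq ι] (b : Basis ι R S)
    (v : ι → S) : discr R v = b.det v ^ 2 * discr R b := by
  rw [b.det_apply, ← discr_of_matrix_vecMul, Basis.toMatrix_map_vecMul]

theorem discr_pair_add_smul (x : S) (p q : R) :
    discr R ![1, algebraMap R S q + p • x] = p ^ 2 * discr R ![1, x] := by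
  have h := discr_of_matrix_mulVec (A := R) ![1, x] !![1, 0; q, p]
  rw [Matrix.det_fin_two_of, one_mul, zero_mul, sub_zero] at h
  rw [← h]
  congr 1
  ext i
  fin_cases i <;> simp [Matrix.mulVec, dotProduct, Fin.sum_univ_two, Algebra.smul_def]

variable [Nontrivial R] [Module.Free R S] [Module.Finite R S]

theorem mul_self_eq_of_finrank_eq_two (h : finrank R S = 2) (x : S) :
    x * x = trace R S x • x - norm R x • 1 := by
  let b := Module.finBasisOfFinrankEq R S h
  have hCH := Matrix.aeval_self_charpoly (leftMulMatrix b x)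
  rw [Matrix.charpoly_fin_two, ← trace_eq_matrix_trace, ← norm_eq_matrix_det,
    aeval_algHom_apply, map_eq_zero_iff _ (leftMulMatrix_injective b)] at hCH
  simp only [map_add, map_sub, map_mul, aeval_X, aeval_C, map_pow] at hCH
  rw [Algebra.smul_def, Algebra.smul_def, mul_one]
  linear_combination hCH

theorem discr_pair_of_finrank_eq_two (h : finrank R S = 2) (x : S) :
    discr R ![1, x] = trace R S x ^ 2 - 4 * norm R x := by
  have hone : trace R S 1 = 2 := by
    rw [← map_one (algebraMap R S), trace_algebraMap, h, nsmul_eq_mul, Nat.cast_ofNat, mul_one]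
  have hsq : trace R S (x * x) = trace R S x ^ 2 - 2 * norm R x := by
    rw [mul_self_eq_of_finrank_eq_two h x, map_sub, map_smul, map_smul, hone, smul_eq_mul,
      smul_eq_mul]
    ring
  rw [discr_def, Matrix.det_fin_two]
  simp only [traceMatrix_apply, traceForm_apply, Matrix.cons_val_zero, Matrix.cons_val_one,
    mul_one, one_mul, hone, hsq]
  ring

end Algebra

namespace NumberField

variable {K : Type*} [Field K] [NumberField K]

theorem exists_discr_pair_eq_sq_mul_discr (h2 : finrank ℚ K = 2) (a : 𝓞 K) :
    ∃ c : ℤ, Algebra.discr ℤ ![1, a] = c ^ 2 * discr K := by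
  let b := Module.finBasisOfFinrankEq ℤ (𝓞 K) (by rw [RingOfIntegers.rank, h2])
  exact ⟨b.det ![1, a], by rw [Algebra.discr_eq_det_sq_mul_discr b, discr_eq_discr K b]⟩

theorem discr_pair_eq_zero_or_lt (h2 : finrank ℚ K = 2) (hd : discr K < -11) (a : 𝓞 K) :
    Algebra.discr ℤ ![1, a] = 0 ∨ Algebra.discr ℤ ![1, a] < -11 := by
  obtain ⟨c, hc⟩ := exists_discr_pair_eq_sq_mul_discr h2 a
  rw [hc]
  rcases eq_or_ne c 0 with rfl | hc0
  · simp
  · right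
    nlinarith [pow_pos (abs_pos.mpr hc0) 2, sq_abs c]

theorem exists_two_mul_eq_one_add (a : 𝓞 K) (ha : a * a = -3) : ∃ b : 𝓞 K, 2 * b = 1 + a := by
  have hint : IsIntegral ℤ ((1 + (a : K)) / 2) := by
    refine ⟨X ^ 2 - X + 1, by monicity!, ?_⟩
    have ha' := congrArg (algebraMap (𝓞 K) K) ha
    simp only [map_mul, map_neg, map_ofNat] at ha'
    simp only [algebraMap_int_eq, eval₂_add, eval₂_sub, eval₂_X_pow, eval₂_X, eval₂_one]
    linear_combination ha' / 4
  refine ⟨⟨_, hint⟩, RingOfIntegers.ext ?_⟩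
  show (2 : K) * ((1 + a) / 2) = 1 + a
  field_simp

theorem natAbs_norm_ne_three (h2 : finrank ℚ K = 2) (hd : discr K < -11) (a : 𝓞 K) :
    (Algebra.norm ℤ a).natAbs ≠ 3 := by
  have hrank : finrank ℤ (𝓞 K) = 2 := by rw [RingOfIntegers.rank, h2]
  intro h3
  have hD := Algebra.discr_pair_of_finrank_eq_two hrank a
  have htn : Algebra.trace ℤ (𝓞 K) a = 0 ∧ Algebra.norm ℤ a = 3 := by
    have hD' := discr_pair_eq_zero_or_lt h2 hd a
    rw [hD] at hD'
    generalize Algebra.trace ℤ (𝓞 K) a = t, Algebra.norm ℤ a = n at hD' h3 ⊢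
    have hsq := sq_nonneg t
    rcases (by omega : n = 3 ∨ n = -3) with rfl | rfl
    · rcases hD' with h | h
      · have ht_le : t ≤ 3 := by nlinarith
        have ht_ge : -3 ≤ t := by nlinarith
        interval_cases t <;> omega
      · exact ⟨by nlinarith, rfl⟩
    · omega
  have ha : a * a = -3 := by
    rw [Algebra.mul_self_eq_of_finrank_eq_two hrank a, htn.1, htn.2]
    simp
  obtain ⟨b, hb⟩ := exists_two_mul_eq_one_add a ha
  have hDb : 4 * Algebra.discr ℤ ![1, b] = -12 := calc
    _ = Algebra.discr ℤ ![1, 2 * b] := by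
      simpa using (Algebra.discr_pair_add_smul b (2 : ℤ) 0).symm
    _ = Algebra.discr ℤ ![1, a] := by simpa [hb] using Algebra.discr_pair_add_smul a (1 : ℤ) 1
    _ = -12 := by rw [hD, htn.1, htn.2]; norm_num
  rcases discr_pair_eq_zero_or_lt h2 hd b with h | h <;> omega

theorem RingOfIntegers.isUnit_iff_natAbs_norm {x : 𝓞 K} :
    IsUnit x ↔ (Algebra.norm ℤ x).natAbs = 1 := by
  rw [isUnit_iff_norm, RingOfIntegers.coe_norm, ← Algebra.coe_norm_int, ← Int.cast_abs,
    Int.cast_eq_one, Int.abs_eq_natAbs, Nat.cast_eq_one]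

theorem RingOfIntegers.irreducible_of_natAbs_norm_eq_sq {p : ℕ} (hp : p.Prime) {x : 𝓞 K}
    (hx : (Algebra.norm ℤ x).natAbs = p ^ 2) (h : ∀ y : 𝓞 K, (Algebra.norm ℤ y).natAbs ≠ p) :
    Irreducible x := by
  simp only [irreducible_iff, isUnit_iff_natAbs_norm, hx]
  refine ⟨(hp.one_lt.trans (by nlinarith [hp.one_lt])).ne', fun u v huv => ?_⟩
  have hmul : (Algebra.norm ℤ u).natAbs * (Algebra.norm ℤ v).natAbs = p ^ 2 := by
    rw [← Int.natAbs_mul, ← map_mul, ← huv, hx]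
  obtain ⟨k, hk, hu⟩ := (Nat.dvd_prime_pow hp).mp (Dvd.intro _ hmul)
  interval_cases k
  · exact .inl hu
  · exact absurd (hu.trans (pow_one p)) (h u)
  · rw [hu, Nat.mul_eq_left (pow_ne_zero 2 hp.ne_zero)] at hmul
    exact .inr hmul

end NumberField

theorem three_inert_of_class_number_one (K : Type*) [Field K] [NumberField K]
    (h2 : Module.finrank ℚ K = 2)
    (hneg : NumberField.discr K < 0)
    (hd : 11 < |NumberField.discr K|)
    (h1 : NumberField.classNumber K = 1) :
    Prime (3 : NumberField.RingOfIntegers K) := by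
  have : IsPrincipalIdealRing (𝓞 K) := classNumber_eq_one_iff.mp h1
  have hd' : discr K < -11 := by rw [abs_of_neg hneg] at hd; linarith
  rw [← irreducible_iff_prime]
  refine RingOfIntegers.irreducible_of_natAbs_norm_eq_sq Nat.prime_three ?_
    (natAbs_norm_ne_three h2 hd')
  rw [← map_ofNat (algebraMap ℤ (𝓞 K)) 3, Algebra.norm_algebraMap, RingOfIntegers.rank, h2]
  rfl
end
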